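/- arXiv:1104.0622 — 6 statements merged into one kernel-verified Lean document; each statement's English description precedes it below -/
import Mathlib

section
/- Let D₀ be the unit disk centered at the origin, α ∈ (0, π/4), and Q a closed convex set with (cos α)·D₀ ⊆ Q ⊆ D₀. Let a, b ∈ ∂Q, let ℓ_a, ℓ_b be supporting lines of Q at a and b respectively, and let θ_a, θ_b be the (unsigned) angles that ℓ_a and ℓ_b form with the line through a and b. Then |θ_a − θ_b| ≤ 2α. -/
open Real
open scoped RealInnerProductSpace

abbrev E2 := EuclideanSpace ℝ (Fin 2)

/-!
If `n` is the outer unit normal of a supporting line of `Q` at `a`, then `cos α • n ∈ Q` gives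
`cos α ≤ ⟪n, a⟫`, so `n` is within angle `α` of `a`. Writing `a` in coordinates along and across
the line `ab`, this forces the angle `θ_a` between the supporting line and `ab` to satisfy
`|θ_a + arcsin d - π / 2| ≤ α`, where `d` is the distance from the origin to the line `ab`.
As `d` is the same for `a` and `b`, the triangle inequality gives `|θ_a - θ_b| ≤ 2α`.
-/

theorem Real.abs_le_of_cos_le_cos {α δ : ℝ} (hα₀ : 0 ≤ α) (hαπ : α ≤ π) (hδ : |δ| ≤ π)
    (h : cos α ≤ cos δ) : |δ| ≤ α :=
  calc |δ| = arccos (cos δ) := by rw [← cos_abs, arccos_cos (abs_nonneg δ) hδ]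
    _ ≤ arccos (cos α) := arccos_le_arccos h
    _ = α := arccos_cos hα₀ hαπ

theorem Real.abs_arcsin_add_arcsin_sub_pi_div_two_le {α s t : ℝ} (hα₀ : 0 ≤ α) (hαπ : α ≤ π)
    (hs₀ : 0 ≤ s) (hs₁ : s ≤ 1) (ht₀ : 0 ≤ t) (ht₁ : t ≤ 1)
    (h : cos α ≤ s * √(1 - t ^ 2) + √(1 - s ^ 2) * t) :
    |arcsin s + arcsin t - π / 2| ≤ α := by
  have hcos : cos (arcsin s + arcsin t - π / 2) = s * √(1 - t ^ 2) + √(1 - s ^ 2) * t := by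
    rw [cos_sub_pi_div_two, sin_add, sin_arcsin (by linarith) hs₁, sin_arcsin (by linarith) ht₁,
      cos_arcsin, cos_arcsin]
  refine abs_le_of_cos_le_cos hα₀ hαπ ?_ (hcos ▸ h)
  have := arcsin_nonneg.2 hs₀
  have := arcsin_nonneg.2 ht₀
  rw [abs_le]
  constructor <;> linarith [arcsin_le_pi_div_two s, arcsin_le_pi_div_two t, pi_pos]

section InnerProductSpace

variable {F : Type*} [NormedAddCommGroup F] [InnerProductSpace ℝ F] {u : F}

theorem norm_sub_inner_smul_sq (hu : ‖u‖ = 1) (v : F) :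
    ‖v - ⟪v, u⟫ • u‖ ^ 2 = ‖v‖ ^ 2 - ⟪v, u⟫ ^ 2 := by
  rw [norm_sub_sq_real, norm_smul, real_inner_smul_right, hu, norm_eq_abs]
  ring_nf
  rw [sq_abs]
  ring

theorem inner_eq_inner_mul_inner_add_inner_sub (hu : ‖u‖ = 1) (v w : F) :
    ⟪v, w⟫ = ⟪v, u⟫ * ⟪w, u⟫ + ⟪v - ⟪v, u⟫ • u, w - ⟪w, u⟫ • u⟫ := by
  rw [inner_sub_left, inner_sub_right, inner_sub_right, real_inner_smul_left,
    real_inner_smul_left, real_inner_smul_right, real_inner_smul_right,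
    real_inner_self_eq_norm_sq, hu, real_inner_comm u w]
  ring

theorem sub_inner_smul_eq_of_sub_eq_smul (hu : ‖u‖ = 1) {v w : F} {c : ℝ} (h : w - v = c • u) :
    w - ⟪w, u⟫ • u = v - ⟪v, u⟫ • u := by
  rw [sub_eq_iff_eq_add'.1 h, inner_add_left, real_inner_smul_left, real_inner_self_eq_norm_sq,
    hu, add_smul]
  simp

theorem le_inner_of_closedBall_subset_of_supports {Q : Set F} {r : ℝ} (hr : 0 ≤ r)
    (hQ : Metric.closedBall 0 r ⊆ Q) {n a : F} (hn : ‖n‖ = 1)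
    (hsupp : ∀ x ∈ Q, ⟪n, x - a⟫ ≤ 0) : r ≤ ⟪n, a⟫ := by
  have := hsupp (r • n) (hQ (by simp [norm_smul, hn, abs_of_nonneg hr]))
  rw [inner_sub_right, real_inner_smul_right, real_inner_self_eq_norm_sq, hn] at this
  linarith

/-- `|⟪n, u⟫|` is the sine of the angle between the direction `u` and the hyperplane orthogonal
to `n`, and `‖x - ⟪x, u⟫ • u‖` is the distance from the origin to the line through `x` along `u`. -/
theorem abs_arcsin_inner_add_arcsin_norm_sub_le {α : ℝ} (hα₀ : 0 ≤ α) (hαπ : α ≤ π)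
    (hu : ‖u‖ = 1) {n x : F} (hn : ‖n‖ = 1) (hx : ‖x‖ ≤ 1) (h : cos α ≤ ⟪n, x⟫) :
    |arcsin |⟪n, u⟫| + arcsin ‖x - ⟪x, u⟫ • u‖ - π / 2| ≤ α := by
  set t := ‖x - ⟪x, u⟫ • u‖
  have ht : t ^ 2 = ‖x‖ ^ 2 - ⟪x, u⟫ ^ 2 := norm_sub_inner_smul_sq hu x
  have hx₁ : ‖x‖ ^ 2 ≤ 1 := by nlinarith [norm_nonneg x]
  have hs₁ : |⟪n, u⟫| ≤ 1 := by simpa [hn, hu] using abs_real_inner_le_norm n u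
  have ht₁ : t ≤ 1 := by nlinarith [norm_nonneg (x - ⟪x, u⟫ • u)]
  have hn_perp : √(1 - |⟪n, u⟫| ^ 2) = ‖n - ⟪n, u⟫ • u‖ := by
    rw [sq_abs, ← one_pow 2, ← hn, ← norm_sub_inner_smul_sq hu, sqrt_sq (norm_nonneg _)]
  have hx_along : |⟪x, u⟫| ≤ √(1 - t ^ 2) := abs_le_sqrt (by linarith)
  refine abs_arcsin_add_arcsin_sub_pi_div_two_le hα₀ hαπ (abs_nonneg _) hs₁ (norm_nonneg _) ht₁ ?_
  calc cos α ≤ ⟪n, x⟫ := h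
    _ = ⟪n, u⟫ * ⟪x, u⟫ + ⟪n - ⟪n, u⟫ • u, x - ⟪x, u⟫ • u⟫ :=
      inner_eq_inner_mul_inner_add_inner_sub hu n x
    _ ≤ |⟪n, u⟫| * |⟪x, u⟫| + ‖n - ⟪n, u⟫ • u‖ * t :=
      add_le_add ((le_abs_self _).trans (abs_mul _ _).le) (real_inner_le_norm _ _)
    _ ≤ |⟪n, u⟫| * √(1 - t ^ 2) + √(1 - |⟪n, u⟫| ^ 2) * t := by
      rw [hn_perp]
      gcongr

end InnerProductSpace

theorem supporting_line_angles_close_general (α : ℝ) (hα : α ∈ Set.Ioo 0 (π / 4))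
    (Q : Set E2)
    (hQ1 : Metric.closedBall (0 : E2) (Real.cos α) ⊆ Q)
    (hQ2 : Q ⊆ Metric.closedBall (0 : E2) 1)
    (a b : E2) (ha : a ∈ frontier Q) (hb : b ∈ frontier Q) (hab : a ≠ b)
    (na nb : E2) (hna : ‖na‖ = 1) (hnb : ‖nb‖ = 1)
    (hsa : ∀ x ∈ Q, ⟪na, x - a⟫ ≤ 0) (hsb : ∀ x ∈ Q, ⟪nb, x - b⟫ ≤ 0) :
    |Real.arcsin (|⟪na, b - a⟫| / ‖b - a‖) -
      Real.arcsin (|⟪nb, b - a⟫| / ‖b - a‖)| ≤ 2 * α := by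
  obtain ⟨hα₀, hα₁⟩ := hα
  have hαπ : α ≤ π := by linarith [pi_pos]
  have hcos : 0 ≤ cos α := cos_nonneg_of_mem_Icc ⟨by linarith, by linarith⟩
  have hclosure : closure Q ⊆ Metric.closedBall 0 1 := closure_minimal hQ2 Metric.isClosed_closedBall
  have hba : b - a ≠ 0 := sub_ne_zero.2 hab.symm
  set u := ‖b - a‖⁻¹ • (b - a)
  have hu : ‖u‖ = 1 := norm_smul_inv_norm hba
  have hsine (n : E2) : |⟪n, b - a⟫| / ‖b - a‖ = |⟪n, u⟫| := by
    rw [real_inner_smul_right, abs_mul, abs_inv, abs_norm, inv_mul_eq_div]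
  have hdist : b - ⟪b, u⟫ • u = a - ⟪a, u⟫ • u :=
    sub_inner_smul_eq_of_sub_eq_smul hu (smul_inv_smul₀ (norm_ne_zero_iff.2 hba) _).symm
  have Ha := abs_arcsin_inner_add_arcsin_norm_sub_le hα₀.le hαπ hu hna
    (by simpa using hclosure (frontier_subset_closure ha))
    (le_inner_of_closedBall_subset_of_supports hcos hQ1 hna hsa)
  have Hb := abs_arcsin_inner_add_arcsin_norm_sub_le hα₀.le hαπ hu hnb
    (by simpa using hclosure (frontier_subset_closure hb))
    (le_inner_of_closedBall_subset_of_supports hcos hQ1 hnb hsb)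
  rw [hdist] at Hb
  rw [hsine, hsine]
  calc _ = |(arcsin |⟪na, u⟫| + arcsin ‖a - ⟪a, u⟫ • u‖ - π / 2) -
        (arcsin |⟪nb, u⟫| + arcsin ‖a - ⟪a, u⟫ • u‖ - π / 2)| := by ring_nf
    _ ≤ α + α := (abs_sub _ _).trans (add_le_add Ha Hb)
    _ = 2 * α := by ring

theorem supporting_line_angles_close (α : ℝ) (hα : α ∈ Set.Ioo 0 (π / 4))
    (Q : Set E2) (hQclosed : IsClosed Q) (hQconv : Convex ℝ Q)
    (hQ1 : Metric.closedBall (0 : E2) (Real.cos α) ⊆ Q)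
    (hQ2 : Q ⊆ Metric.closedBall (0 : E2) 1)
    (a b : E2) (ha : a ∈ frontier Q) (hb : b ∈ frontier Q) (hab : a ≠ b)
    (na nb : E2) (hna : ‖na‖ = 1) (hnb : ‖nb‖ = 1)
    (hsa : ∀ x ∈ Q, ⟪na, x - a⟫ ≤ 0) (hsb : ∀ x ∈ Q, ⟪nb, x - b⟫ ≤ 0) :
    |Real.arcsin (|⟪na, b - a⟫| / ‖b - a‖) -
      Real.arcsin (|⟪nb, b - a⟫| / ‖b - a‖)| ≤ 2 * α :=
  supporting_line_angles_close_general α hα Q hQ1 hQ2 a b ha hb hab na nb hna hnb hsa hsb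
end

section
/- Let P be a finite set of points in the plane in general position, and let p, q ∈ P be such that pq is an edge of the Delaunay triangulation of P whose two adjacent Delaunay triangles are pqr⁺ and pqr⁻. Then the angle at which p sees the Voronoi edge e_pq (the common edge of the Voronoi cells of p and q) equals π − (∠pr⁺q + ∠pr⁻q), and equals the angle at which q sees e_pq. -/
open Real EuclideanGeometry

/-!
Let `u = ∡ q p a` and `v = ∡ b p q` be the oriented base angles of the isosceles triangles over
`pq` whose apexes are the circumcentres `a` and `b`. Orient the plane so that `r⁺` lies on the
positive side of `pq`; then `r⁻` lies on the negative side, and the inscribed angle theorem gives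
`∠ p r⁺ q = π / 2 - u` and `∠ p r⁻ q = π / 2 - v`. Since `r⁺` is not inside the circle about `b`,
the centre `a` lies at least as far as `b` towards `r⁺` along the bisector of `pq`, so
`∠ a p b = u + v`. Finally `apb` and `aqb` are congruent by SSS.
-/

open scoped RealInnerProductSpace

namespace Orientation
variable {V : Type*} [NormedAddCommGroup V] [InnerProductSpace ℝ V] [Fact (Module.finrank ℝ V = 2)]
  (o : Orientation ℝ V (Fin 2))

theorem oangle_sign_eq_sign_areaForm (x y : V) :
    (o.oangle x y).sign = SignType.sign (o.areaForm x y) := by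
  rcases eq_or_ne x 0 with rfl | hx
  · simp
  rcases eq_or_ne y 0 with rfl | hy
  · simp
  rw [oangle, Real.Angle.sign, Real.Angle.sin_coe, Complex.sin_arg, o.norm_kahler,
    o.kahler_apply_apply]
  simp only [Complex.real_smul, Complex.add_im, Complex.ofReal_im, Complex.mul_im,
    Complex.ofReal_re, Complex.I_im, mul_one, Complex.I_re, mul_zero, add_zero, zero_add]
  rw [div_eq_mul_inv, sign_mul, sign_pos (inv_pos.2 (by positivity)), mul_one]

theorem areaForm_pos_of_inner_nonneg {w d r : V} (hwd : ⟪w, d⟫ = 0) (hd : d ≠ 0)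
    (hdr : 0 ≤ ⟪d, r⟫) (hwr : 0 < o.areaForm w r) : 0 < o.areaForm w d := by
  have key := o.inner_mul_areaForm_sub d w r
  rw [real_inner_comm, hwd, o.areaForm_swap d w] at key
  have : 0 < ‖d‖ ^ 2 * o.areaForm w r := by positivity
  nlinarith

theorem areaForm_pos_of_inner_pos {w d y : V} (hwd : ⟪w, d⟫ = 0) (hwy : 0 < ⟪w, y⟫)
    (hw : 0 < o.areaForm w d) : 0 < o.areaForm y d := by
  have key := o.inner_mul_areaForm_sub w y d
  rw [hwd] at key
  have hw0 : w ≠ 0 := by rintro rfl; simp at hwy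
  have : 0 < ‖w‖ ^ 2 := by positivity
  nlinarith

end Orientation

theorem Real.Angle.toReal_add_of_abs_lt_pi_div_two {θ ψ : Real.Angle} (hθ : |θ.toReal| < π / 2)
    (hψ : |ψ.toReal| < π / 2) : (θ + ψ).toReal = θ.toReal + ψ.toReal := by
  rw [abs_lt] at hθ hψ
  have hsum : θ + ψ = ((θ.toReal + ψ.toReal : ℝ) : Real.Angle) := by
    rw [Real.Angle.coe_add, θ.coe_toReal, ψ.coe_toReal]
  rw [hsum, Real.Angle.toReal_coe_eq_self_iff]
  constructor <;> linarith

namespace EuclideanGeometry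
variable {V P : Type*} [NormedAddCommGroup V] [InnerProductSpace ℝ V] [MetricSpace P]
  [NormedAddTorsor V P]

theorem inner_vsub_vsub_nonneg_of_dist_eq_of_dist_le {a b p x : P} (ha : dist a p = dist a x)
    (hb : dist b p ≤ dist b x) : 0 ≤ ⟪a -ᵥ b, x -ᵥ p⟫ := by
  have expand : ∀ c : P, dist c x ^ 2 = dist c p ^ 2 - 2 * ⟪c -ᵥ p, x -ᵥ p⟫ + dist x p ^ 2 := by
    intro c
    rw [dist_eq_norm_vsub V, dist_eq_norm_vsub V, dist_eq_norm_vsub V,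
      ← vsub_sub_vsub_cancel_right c x p, norm_sub_sq_real]
  have hb2 : dist b p ^ 2 ≤ dist b x ^ 2 := pow_le_pow_left₀ dist_nonneg hb 2
  rw [← vsub_sub_vsub_cancel_right a b p, inner_sub_left]
  have ha2 : dist a p ^ 2 = dist a x ^ 2 := by rw [ha]
  linarith [expand a, expand b]

variable [Fact (Module.finrank ℝ V = 2)] [Module.Oriented ℝ V (Fin 2)]

local notation "o" => Module.Oriented.positiveOrientation

theorem angle_eq_pi_div_two_sub_toReal_oangle_of_dist_eq_of_sign_eq_one {c p q x : P}
    (hq : dist c p = dist c q) (hx : dist c p = dist c x) (hs : (∡ p x q).sign = 1) :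
    ∠ p x q = π / 2 - (∡ q p c).toReal := by
  have hps : p ∈ (⟨c, dist c p⟩ : Sphere P) := mem_sphere'.2 rfl
  have hqs : q ∈ (⟨c, dist c p⟩ : Sphere P) := mem_sphere'.2 hq.symm
  have hxs : x ∈ (⟨c, dist c p⟩ : Sphere P) := mem_sphere'.2 hx.symm
  have hpx : p ≠ x := left_ne_of_oangle_sign_eq_one hs
  have hqx : q ≠ x := right_ne_of_oangle_sign_eq_one hs
  have hpq : p ≠ q := left_ne_right_of_oangle_sign_eq_one hs
  have hsum := Sphere.two_zsmul_oangle_center_add_two_zsmul_oangle_eq_pi hps hxs hqs hpx.symm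
    hqx.symm hpq
  rw [← smul_add, Real.Angle.two_zsmul_eq_pi_iff] at hsum
  have hc := abs_lt.1 (Sphere.abs_oangle_center_right_toReal_lt_pi_div_two hps hqs)
  have hpos : 0 ≤ (∡ p x q).toReal := Real.Angle.toReal_nonneg_iff_sign_nonneg.2 (by simp [hs])
  rw [angle_eq_abs_oangle_toReal hpx hqx]
  rcases hsum with h | h
  all_goals
    rw [← eq_sub_iff_add_eq', ← (∡ q p c).coe_toReal, ← Real.Angle.coe_sub] at h
    rw [h, Real.Angle.toReal_coe_eq_self_iff.2 ⟨by linarith, by linarith⟩] at hpos ⊢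
  · exact abs_of_nonneg hpos
  · linarith

theorem angle_eq_pi_div_two_sub_toReal_oangle_of_dist_eq_of_sign_eq_neg_one {c p q x : P}
    (hq : dist c p = dist c q) (hx : dist c p = dist c x) (hs : (∡ p x q).sign = -1) :
    ∠ p x q = π / 2 - (∡ c p q).toReal := by
  have hs' : (∡ q x p).sign = 1 := by rw [oangle_rev, Real.Angle.sign_neg, hs, neg_neg]
  rw [angle_comm, angle_eq_pi_div_two_sub_toReal_oangle_of_dist_eq_of_sign_eq_one hq.symm
    (hq.symm.trans hx) hs', oangle_eq_oangle_of_dist_eq hq]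

theorem toReal_oangle_nonneg_of_dist_le {a b p q x : P} (ha : dist a p = dist a q)
    (hb : dist b p = dist b q) (hax : dist a p = dist a x) (hbx : dist b p ≤ dist b x)
    (hs : (∡ q p x).sign = 1) : 0 ≤ (∡ b p a).toReal := by
  rcases eq_or_ne a b with rfl | hab
  · simp
  have hperp : ⟪q -ᵥ p, a -ᵥ b⟫ = 0 := by
    rw [real_inner_comm]
    exact inner_vsub_vsub_of_dist_eq_of_dist_eq (by rw [dist_comm, hb, dist_comm])
      (by rw [dist_comm, ha, dist_comm])
  have hb_inner : 0 < ⟪q -ᵥ p, b -ᵥ p⟫ := by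
    rw [real_inner_comm, AffineSubspace.mem_perpBisector_iff_inner_eq.1
      (AffineSubspace.mem_perpBisector_iff_dist_eq.2 hb)]
    have := dist_pos.2 (left_ne_of_oangle_sign_eq_one hs).symm
    positivity
  have hx_inner : 0 ≤ ⟪a -ᵥ b, x -ᵥ p⟫ := inner_vsub_vsub_nonneg_of_dist_eq_of_dist_le hax hbx
  have hx_area : 0 < o.areaForm (q -ᵥ p) (x -ᵥ p) := by
    rw [← sign_eq_one_iff, ← o.oangle_sign_eq_sign_areaForm]
    exact hs
  -- `a -ᵥ b` is normal to `pq` and points to the side of `x`, while `b -ᵥ p` points along `pq`.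
  have hab_area : 0 < o.areaForm (b -ᵥ p) (a -ᵥ b) := o.areaForm_pos_of_inner_pos hperp hb_inner
    (o.areaForm_pos_of_inner_nonneg hperp (vsub_ne_zero.2 hab) hx_inner hx_area)
  have hsign : (o.oangle (b -ᵥ p) (a -ᵥ p)).sign = 1 := by
    rw [← vsub_add_vsub_cancel a b p, add_comm, o.oangle_sign_add_right,
      o.oangle_sign_eq_sign_areaForm, sign_pos hab_area]
  exact Real.Angle.toReal_nonneg_iff_sign_nonneg.2 (by rw [oangle, hsign]; decide)

theorem angle_eq_pi_sub_angle_add_angle_of_dist_eq {a b p q x y : P} (hapq : dist a p = dist a q)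
    (hax : dist a p = dist a x) (hbpq : dist b p = dist b q) (hby : dist b p = dist b y)
    (hbx : dist b p ≤ dist b x) (hx : (∡ p x q).sign = 1) (hy : (∡ p y q).sign = -1) :
    ∠ a p b = π - (∠ p x q + ∠ p y q) := by
  have hpq : p ≠ q := left_ne_right_of_oangle_sign_eq_one hx
  have hap : a ≠ p := by rintro rfl; exact hpq (dist_eq_zero.1 (hapq.symm.trans (dist_self a)))
  have hbp : b ≠ p := by rintro rfl; exact hpq (dist_eq_zero.1 (hbpq.symm.trans (dist_self b)))
  have hnonneg : 0 ≤ (∡ b p a).toReal := toReal_oangle_nonneg_of_dist_le hapq hbpq hax hbx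
    ((oangle_rotate_sign q p x).symm.trans hx)
  rw [angle_eq_pi_div_two_sub_toReal_oangle_of_dist_eq_of_sign_eq_one hapq hax hx,
    angle_eq_pi_div_two_sub_toReal_oangle_of_dist_eq_of_sign_eq_neg_one hbpq hby hy, angle_comm,
    angle_eq_abs_oangle_toReal hbp hap, abs_of_nonneg hnonneg, ← oangle_add hbp hpq.symm hap,
    Real.Angle.toReal_add_of_abs_lt_pi_div_two
      (abs_oangle_right_toReal_lt_pi_div_two_of_dist_eq hbpq)
      (abs_oangle_left_toReal_lt_pi_div_two_of_dist_eq hapq.symm)]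
  ring

end EuclideanGeometry

instance : Fact (Module.finrank ℝ E2 = 2) := ⟨finrank_euclideanSpace_fin⟩

-- Any orientation will do: the theorem involves only unoriented angles.
noncomputable instance : Module.Oriented ℝ E2 (Fin 2) :=
  ⟨Module.Basis.orientation (EuclideanSpace.basisFun (Fin 2) ℝ).toBasis⟩

theorem voronoi_edge_extent_eq_general (P : Finset E2) (p q rp rm a b : E2)
    (hrp : rp ∈ P) (hrm : rm ∈ P)
    (hindep : ¬ Collinear ℝ ({p, q, rp} : Set E2))
    (hapq : dist a p = dist a q) (harp : dist a p = dist a rp)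
    (hbpq : dist b p = dist b q) (hbrm : dist b p = dist b rm)
    (haempty : ∀ x ∈ P, dist a p ≤ dist a x)
    (hbempty : ∀ x ∈ P, dist b p ≤ dist b x)
    (hopp : (affineSpan ℝ ({p, q} : Set E2)).SOppSide rp rm) :
    ∠ a p b = π - (∠ p rp q + ∠ p rm q) ∧ ∠ a p b = ∠ a q b := by
  have hcongr : Congruent ![a, p, b] ![a, q, b] :=
    side_side_side hapq (by rw [dist_comm, hbpq, dist_comm]) rfl
  refine ⟨?_, by simpa using angle_eq_of_congruent hcongr 0 1 2⟩
  have hsign : (∡ p rm q).sign = -(∡ p rp q).sign :=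
    hopp.oangle_sign_eq_neg (left_mem_affineSpan_pair ℝ p q) (right_mem_affineSpan_pair ℝ p q)
  have hne : (∡ p rp q).sign ≠ 0 := by
    rwa [Ne, oangle_sign_eq_zero_iff_collinear, Set.pair_comm]
  rcases hs : (∡ p rp q).sign with _ | _ | _
  · exact absurd hs hne
  · rw [hs] at hsign
    rw [angle_comm, add_comm]
    exact angle_eq_pi_sub_angle_add_angle_of_dist_eq hbpq hbrm hapq harp (haempty rm hrm) hsign hs
  · rw [hs] at hsign
    exact angle_eq_pi_sub_angle_add_angle_of_dist_eq hapq harp hbpq hbrm (hbempty rp hrp) hs hsign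

theorem voronoi_edge_extent_eq (P : Finset E2) (p q rp rm a b : E2)
    (hp : p ∈ P) (hq : q ∈ P) (hrp : rp ∈ P) (hrm : rm ∈ P) (hpq : p ≠ q)
    (hindep : ¬ Collinear ℝ ({p, q, rp} : Set E2))
    (hindep' : ¬ Collinear ℝ ({p, q, rm} : Set E2))
    (hapq : dist a p = dist a q) (harp : dist a p = dist a rp)
    (hbpq : dist b p = dist b q) (hbrm : dist b p = dist b rm)
    (haempty : ∀ x ∈ P, dist a p ≤ dist a x)
    (hbempty : ∀ x ∈ P, dist b p ≤ dist b x)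
    (hopp : (affineSpan ℝ ({p, q} : Set E2)).SOppSide rp rm)
    (hab : a ≠ b) :
    ∠ a p b = π - (∠ p rp q + ∠ p rm q) ∧ ∠ a p b = ∠ a q b :=
  voronoi_edge_extent_eq_general P p q rp rm a b hrp hrm hindep hapq harp hbpq hbrm haempty hbempty
    hopp
end

section
/- Let p, q be distinct points in the plane, β > 1, and suppose both disks of radius (β/2)·|pq| that pass through p and q have interiors disjoint from a finite point set P ⊇ {p,q} (minus {p,q}). Let θ = arccos(1/β). Then p sees the Voronoi edge e_pq (in the Euclidean Voronoi diagram of P) at an angle of at least 2θ. In particular, if β ≥ 1 + α² for suitable small α > 0 (so that arccos(1/β) ≥ α/2), then pq is an α-stable Delaunay edge. -/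
/-!
In the plane the two circles of radius `R = β|pq|/2` centred at `p` and `q` meet exactly in
`c₁` and `c₂`, so these are symmetric about the midpoint of `pq`: `c₁ p c₂ q` is a rhombus and
`c₂ - p = q - c₁`. Polarization then gives `cos ∠c₁pc₂ = |pq|²/(2R²) - 1 = 2/β² - 1`, which is
`cos (2 arccos (1/β))`. The emptiness of the two disks says that `p` (and `q`) is a nearest site
to each centre, i.e. `c₁` and `c₂` lie on the Voronoi edge of `pq`.
-/

open Real EuclideanGeometry

theorem forall_mem_dist_le_of_dist_eq {α : Type*} [PseudoMetricSpace α] {s : Set α}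
    {c p q : α} {R : ℝ} (hp : dist c p = R) (hq : dist c q = R)
    (h : ∀ r ∈ s, r ≠ p → r ≠ q → R ≤ dist c r) : ∀ r ∈ s, dist c p ≤ dist c r := by
  intro r hr
  by_cases hrp : r = p
  · rw [hrp]
  by_cases hrq : r = q
  · rw [hrq, hp, hq]
  exact hp ▸ h r hr hrp hrq

theorem Real.arccos_two_mul_sq_sub_one {x : ℝ} (hx₀ : 0 ≤ x) (hx₁ : x ≤ 1) :
    arccos (2 * x ^ 2 - 1) = 2 * arccos x := by
  have hcos : cos (2 * arccos x) = 2 * x ^ 2 - 1 := by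
    rw [cos_two_mul, cos_arccos (by linarith) hx₁]
  rw [← hcos, arccos_cos (mul_nonneg zero_le_two (arccos_nonneg x))]
  linarith [(arccos_le_pi_div_two (x := x)).mpr hx₀]

namespace InnerProductGeometry

variable {V : Type*} [NormedAddCommGroup V] [InnerProductSpace ℝ V]

theorem angle_eq_arccos_of_norm_eq {x y : V} {R : ℝ} (hx : ‖x‖ = R) (hy : ‖y‖ = R)
    (hR : R ≠ 0) : angle x y = arccos (‖x + y‖ ^ 2 / (2 * R ^ 2) - 1) := by
  rw [angle, real_inner_eq_norm_add_mul_self_sub_norm_mul_self_sub_norm_mul_self_div_two, hx, hy]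
  congr 1
  field_simp
  ring

end InnerProductGeometry

namespace EuclideanGeometry

variable {V Pt : Type*} [NormedAddCommGroup V] [InnerProductSpace ℝ V] [MetricSpace Pt]
  [NormedAddTorsor V Pt]

theorem eq_pointReflection_midpoint_of_dist_eq [FiniteDimensional ℝ V]
    (hd : Module.finrank ℝ V = 2) {p q c₁ c₂ : Pt} {R : ℝ} (hpq : p ≠ q) (hc : c₁ ≠ c₂)
    (h₁p : dist c₁ p = R) (h₁q : dist c₁ q = R) (h₂p : dist c₂ p = R) (h₂q : dist c₂ q = R) :
    c₂ = AffineIsometryEquiv.pointReflection ℝ (midpoint ℝ p q) c₁ := by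
  set σ := AffineIsometryEquiv.pointReflection ℝ (midpoint ℝ p q)
  -- `σ` preserves both circles, and its only fixed point is the midpoint.
  have hσ {c : Pt} (hcp : dist c p = R) (hcq : dist c q = R) : σ c = c₁ ∨ σ c = c₂ := by
    have hσp : dist (σ c) p = R := by
      rw [← hcq, ← σ.dist_map c q, AffineIsometryEquiv.pointReflection_midpoint_right]
    have hσq : dist (σ c) q = R := by
      rw [← hcp, ← σ.dist_map c p, AffineIsometryEquiv.pointReflection_midpoint_left]
    exact eq_of_dist_eq_of_dist_eq_of_finrank_eq_two hd hpq hc h₁p h₂p hσp h₁q h₂q hσq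
  rcases hσ h₁p h₁q with h₁ | h₁
  · rcases hσ h₂p h₂q with h₂ | h₂
    · rw [← h₂, AffineIsometryEquiv.pointReflection_involutive]
    · rw [AffineIsometryEquiv.pointReflection_fixed_iff] at h₁ h₂
      exact absurd (h₁.trans h₂.symm) hc
  · exact h₁.symm

theorem angle_eq_arccos_of_dist_eq [FiniteDimensional ℝ V] (hd : Module.finrank ℝ V = 2)
    {p q c₁ c₂ : Pt} {R : ℝ} (hpq : p ≠ q) (hc : c₁ ≠ c₂)
    (h₁p : dist c₁ p = R) (h₁q : dist c₁ q = R) (h₂p : dist c₂ p = R) (h₂q : dist c₂ q = R) :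
    ∠ c₁ p c₂ = arccos (dist p q ^ 2 / (2 * R ^ 2) - 1) := by
  have hrefl := eq_pointReflection_midpoint_of_dist_eq hd hpq hc h₁p h₁q h₂p h₂q
  have hR : R ≠ 0 := by
    rintro rfl
    exact hpq ((dist_eq_zero.mp h₁p).symm.trans (dist_eq_zero.mp h₁q))
  have h₂ : c₂ -ᵥ p = q -ᵥ c₁ := by
    set σ := AffineIsometryEquiv.pointReflection ℝ (midpoint ℝ p q)
    rw [show c₂ -ᵥ p = σ c₁ -ᵥ σ q by rw [hrefl, AffineIsometryEquiv.pointReflection_midpoint_right],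
      AffineIsometryEquiv.pointReflection_apply, AffineIsometryEquiv.pointReflection_apply,
      vadd_vsub_vadd_cancel_right, vsub_sub_vsub_cancel_left]
  rw [angle, h₂, InnerProductGeometry.angle_eq_arccos_of_norm_eq (R := R) _ _ hR, add_comm,
    vsub_add_vsub_cancel, ← dist_eq_norm_vsub, dist_comm]
  · rwa [← dist_eq_norm_vsub]
  · rwa [← dist_eq_norm_vsub, dist_comm]

end EuclideanGeometry

theorem beta_skeleton_edge_is_stable_general (P : Finset E2) (p q c₁ c₂ : E2) (β : ℝ)
    (hpq : p ≠ q) (hβ : 1 < β)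
    (hc₁p : dist c₁ p = β / 2 * dist p q) (hc₁q : dist c₁ q = β / 2 * dist p q)
    (hc₂p : dist c₂ p = β / 2 * dist p q) (hc₂q : dist c₂ q = β / 2 * dist p q)
    (hcc : c₁ ≠ c₂)
    (hempty₁ : ∀ r ∈ P, r ≠ p → r ≠ q → β / 2 * dist p q ≤ dist c₁ r)
    (hempty₂ : ∀ r ∈ P, r ≠ p → r ≠ q → β / 2 * dist p q ≤ dist c₂ r) :
    (∀ r ∈ P, dist c₁ p ≤ dist c₁ r) ∧ (∀ r ∈ P, dist c₂ p ≤ dist c₂ r) ∧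
    2 * Real.arccos (1 / β) ≤ ∠ c₁ p c₂ ∧
    (∀ α : ℝ, 0 < α → α / 2 ≤ Real.arccos (1 / β) → α ≤ ∠ c₁ p c₂) := by
  have hangle : ∠ c₁ p c₂ = 2 * arccos (1 / β) := by
    have hd : dist p q ≠ 0 := dist_ne_zero.mpr hpq
    rw [angle_eq_arccos_of_dist_eq finrank_euclideanSpace_fin hpq hcc hc₁p hc₁q hc₂p hc₂q,
      ← arccos_two_mul_sq_sub_one (by positivity) ((div_le_one (by linarith)).mpr hβ.le)]
    congr 1
    field_simp
  refine ⟨forall_mem_dist_le_of_dist_eq (s := P) hc₁p hc₁q hempty₁,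
    forall_mem_dist_le_of_dist_eq (s := P) hc₂p hc₂q hempty₂, hangle.ge, fun α _ hα => ?_⟩
  linarith

theorem beta_skeleton_edge_is_stable (P : Finset E2) (p q c₁ c₂ : E2) (β : ℝ)
    (hp : p ∈ P) (hq : q ∈ P) (hpq : p ≠ q) (hβ : 1 < β)
    (hc₁p : dist c₁ p = β / 2 * dist p q) (hc₁q : dist c₁ q = β / 2 * dist p q)
    (hc₂p : dist c₂ p = β / 2 * dist p q) (hc₂q : dist c₂ q = β / 2 * dist p q)
    (hcc : c₁ ≠ c₂)
    (hempty₁ : ∀ r ∈ P, r ≠ p → r ≠ q → β / 2 * dist p q ≤ dist c₁ r)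
    (hempty₂ : ∀ r ∈ P, r ≠ p → r ≠ q → β / 2 * dist p q ≤ dist c₂ r) :
    (∀ r ∈ P, dist c₁ p ≤ dist c₁ r) ∧ (∀ r ∈ P, dist c₂ p ≤ dist c₂ r) ∧
    2 * Real.arccos (1 / β) ≤ ∠ c₁ p c₂ ∧
    (∀ α : ℝ, 0 < α → α / 2 ≤ Real.arccos (1 / β) → α ≤ ∠ c₁ p c₂) :=
  beta_skeleton_edge_is_stable_general P p q c₁ c₂ β hpq hβ hc₁p hc₁q hc₂p hc₂q hcc hempty₁ hempty₂
end

section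
/- Let p, q ∈ ℝ², let v be a unit vector, β ∈ (0, π/2), and suppose that for every unit vector w making angle at most β with v, the ray w[p] = {p + λw : λ ≥ 0} intersects the perpendicular bisector b_pq at a point a_w such that the disk centered at a_w through p and q contains no point of a finite set P (with p,q ∈ P) in its interior. Let C[q] be the cone with apex q, axis the ray from q through p, and half-angle β. Then ⟨p, v⟩ ≥ ⟨p', v⟩ for every p' ∈ (P ∩ C[q]) \ {q}; that is, p is extreme in direction v among the points of P in C[q] other than q. -/
open Real EuclideanGeometry
open scoped RealInnerProductSpace

set_option maxHeartbeats 1000000 in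
private lemma cone_arith (cb sb a b s r nd nu e : ℝ)
    (hcb : 0 < cb) (hsb : 0 < sb) (hpyth : sb ^ 2 + cb ^ 2 = 1)
    (ha : 0 < a) (hb : 0 ≤ b) (hr : 0 < r)
    (hnd : 0 < nd) (hnu : 0 < nu)
    (hd2 : nd ^ 2 = a ^ 2 + b ^ 2) (hu2 : nu ^ 2 = s ^ 2 + r ^ 2)
    (hkey : cb * (nd * nu) ≤ a * s + e) (he : e ≤ b * r)
    (hneg : cb * s + sb * r ≤ 0) : False := by
  have hg' : 0 ≤ -(s * cb + r * sb) := by linarith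
  have hs_neg : s < 0 := by nlinarith
  have hy : 0 ≤ r * cb - s * sb := by nlinarith
  have hxy : (-(s * cb + r * sb)) ^ 2 + (r * cb - s * sb) ^ 2 = s ^ 2 + r ^ 2 := by
    linear_combination (s ^ 2 + r ^ 2) * hpyth
  have hABnonneg : 0 ≤ a * (-(s * cb + r * sb)) + b * (r * cb - s * sb) :=
    add_nonneg (mul_nonneg ha.le hg') (mul_nonneg hb hy)
  have hABsq : (a * (-(s * cb + r * sb)) + b * (r * cb - s * sb)) ^ 2 ≤ (nd * nu) ^ 2 := by
    nlinarith [sq_nonneg (a * (r * cb - s * sb) - b * (-(s * cb + r * sb)))]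
  have hABN : a * (-(s * cb + r * sb)) + b * (r * cb - s * sb) ≤ nd * nu := by
    nlinarith [mul_pos hnd hnu]
  have hid : cb * (a * (-(s * cb + r * sb)) + b * (r * cb - s * sb)) - (a * s + b * r)
      = (a * cb + b * sb) * (-(s * cb + r * sb)) - a * s := by
    linear_combination (b * r) * hpyth
  have h1' : (0:ℝ) ≤ a * cb + b * sb := by nlinarith
  have hD : a * s + b * r
      < cb * (a * (-(s * cb + r * sb)) + b * (r * cb - s * sb)) := by
    nlinarith [mul_nonneg h1' hg', mul_pos ha (neg_pos.mpr hs_neg)]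
  have hlast := mul_le_mul_of_nonneg_left hABN hcb.le
  linarith

set_option maxHeartbeats 1000000 in
theorem empty_cone_extremal (P : Finset E2) (p q : E2)
    (hp : p ∈ P) (hq : q ∈ P) (hpq : p ≠ q)
    (v : E2) (hv : ‖v‖ = 1) (β : ℝ) (hβ0 : 0 < β) (hβ : β < π / 2)
    (hlong : ∀ w : E2, ‖w‖ = 1 → InnerProductGeometry.angle w v ≤ β →
      ∃ t : ℝ, 0 ≤ t ∧ dist (p + t • w) p = dist (p + t • w) q ∧
        ∀ r ∈ P, dist (p + t • w) p ≤ dist (p + t • w) r) :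
    ∀ p' ∈ P, p' ≠ q → InnerProductGeometry.angle (p' - q) (p - q) ≤ β →
      ⟪p', v⟫ ≤ ⟪p, v⟫ := by
  intro p' hp' hp'q hang
  by_contra hlt
  push_neg at hlt
  set c : E2 := q - p with hc
  set d : E2 := p' - p with hd
  have hc0 : c ≠ 0 := sub_ne_zero.mpr (Ne.symm hpq)
  have hd0 : d ≠ 0 := by
    intro h
    have hpp : p' = p := by
      have := sub_eq_zero.mp (hd ▸ h)
      exact this
    rw [hpp] at hlt
    exact lt_irrefl _ hlt
  have hcn : (0:ℝ) < ‖c‖ := norm_pos_iff.mpr hc0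
  have hdn : (0:ℝ) < ‖d‖ := norm_pos_iff.mpr hd0
  have hβπ : β ≤ π := le_of_lt (lt_trans hβ (by linarith [pi_pos]))
  have hcosβ : (0:ℝ) < Real.cos β := Real.cos_pos_of_mem_Ioo ⟨by linarith [pi_pos], hβ⟩
  have hsinβ : (0:ℝ) < Real.sin β := Real.sin_pos_of_pos_of_lt_pi hβ0 (by linarith [pi_pos])
  set u : E2 := (‖d‖^2)⁻¹ • d - (‖c‖^2)⁻¹ • c with hu
  have e1 : p' - q = d - c := by rw [hd, hc]; abel
  have e2 : p - q = -c := by rw [hc]; abel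
  -- similar triangle identities
  have h1 : ⟪d, u⟫ * ‖c‖^2 = ⟪p' - q, p - q⟫ := by
    rw [e1, e2, hu]
    simp only [inner_sub_left, inner_sub_right, inner_neg_right, real_inner_smul_right,
      real_inner_self_eq_norm_sq]
    rw [real_inner_comm c d]
    field_simp
    try ring
  have h2a : ‖u‖^2 * (‖d‖^2 * ‖c‖^2) = ‖p' - q‖^2 := by
    rw [e1, ← real_inner_self_eq_norm_sq u, ← real_inner_self_eq_norm_sq (d - c), hu]
    simp only [inner_sub_left, inner_sub_right, real_inner_smul_left, real_inner_smul_right]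
    rw [real_inner_self_eq_norm_sq d, real_inner_self_eq_norm_sq c, real_inner_comm c d]
    field_simp
    try ring
  have hn1 : (0:ℝ) < ‖p' - q‖ := norm_pos_iff.mpr (sub_ne_zero.mpr hp'q)
  have hu0 : u ≠ 0 := by
    intro h
    have hz : ‖p' - q‖^2 = 0 := by rw [← h2a, h]; simp
    nlinarith [hn1, hz]
  have hun : (0:ℝ) < ‖u‖ := norm_pos_iff.mpr hu0
  have h2b : ‖d‖ * ‖u‖ * ‖c‖ = ‖p' - q‖ := by
    have hsq : (‖d‖ * ‖u‖ * ‖c‖)^2 = ‖p' - q‖^2 := by rw [← h2a]; ring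
    calc ‖d‖ * ‖u‖ * ‖c‖ = √((‖d‖ * ‖u‖ * ‖c‖)^2) := (Real.sqrt_sq (by positivity)).symm
      _ = √(‖p' - q‖^2) := by rw [hsq]
      _ = ‖p' - q‖ := Real.sqrt_sq (norm_nonneg _)
  have hpqc : ‖p - q‖ = ‖c‖ := by rw [e2, norm_neg]
  have h2 : ‖d‖ * ‖u‖ * ‖c‖^2 = ‖p' - q‖ * ‖p - q‖ := by
    rw [hpqc, ← h2b]; ring
  -- angle hypothesis as an inner product inequality
  have hcos' : Real.cos β * (‖p' - q‖ * ‖p - q‖) ≤ ⟪p' - q, p - q⟫ := by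
    have h3 := InnerProductGeometry.cos_angle (p' - q) (p - q)
    have h4 : Real.cos β ≤ Real.cos (InnerProductGeometry.angle (p' - q) (p - q)) :=
      Real.cos_le_cos_of_nonneg_of_le_pi (InnerProductGeometry.angle_nonneg _ _) hβπ hang
    rw [h3] at h4
    have hn2 : (0:ℝ) < ‖p - q‖ := norm_pos_iff.mpr (sub_ne_zero.mpr hpq)
    exact (le_div_iff₀ (by positivity)).mp h4
  have hkey : Real.cos β * (‖d‖ * ‖u‖) ≤ ⟪d, u⟫ := by
    rw [← h1, ← h2] at hcos'
    nlinarith [pow_pos hcn 2]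
  -- orthogonal decomposition along v
  have hvv : ⟪v, v⟫ = 1 := by rw [real_inner_self_eq_norm_sq, hv]; norm_num
  set a : ℝ := ⟪v, d⟫ with hadef
  set s : ℝ := ⟪v, u⟫ with hsdef
  have ha : (0:ℝ) < a := by
    have : a = ⟪p', v⟫ - ⟪p, v⟫ := by
      rw [hadef, hd, inner_sub_right, real_inner_comm v p', real_inner_comm v p]
    linarith [this ▸ sub_pos.mpr hlt]
  set dp : E2 := d - a • v with hdpdef
  set up : E2 := u - s • v with hupdef
  have hvdp : ⟪v, dp⟫ = 0 := by
    rw [hdpdef, inner_sub_right, real_inner_smul_right, hvv]; ring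
  have hvup : ⟪v, up⟫ = 0 := by
    rw [hupdef, inner_sub_right, real_inner_smul_right, hvv]; ring
  have hdpv : ⟪dp, v⟫ = 0 := by rw [real_inner_comm]; exact hvdp
  have hupv : ⟪up, v⟫ = 0 := by rw [real_inner_comm]; exact hvup
  set b : ℝ := ‖dp‖ with hbdef
  set r : ℝ := ‖up‖ with hrdef
  have hds : d = dp + a • v := by rw [hdpdef]; abel
  have hus : u = up + s • v := by rw [hupdef]; abel
  have hd2 : ‖d‖^2 = a^2 + b^2 := by
    calc ‖d‖^2 = ‖dp + a • v‖^2 := by rw [← hds]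
      _ = ‖dp‖^2 + 2 * ⟪dp, a • v⟫ + ‖a • v‖^2 := norm_add_sq_real _ _
      _ = a^2 + b^2 := by
          rw [real_inner_smul_right, hdpv, norm_smul, hv]
          simp [sq_abs]
          try ring
  have hu2 : ‖u‖^2 = s^2 + r^2 := by
    calc ‖u‖^2 = ‖up + s • v‖^2 := by rw [← hus]
      _ = ‖up‖^2 + 2 * ⟪up, s • v⟫ + ‖s • v‖^2 := norm_add_sq_real _ _
      _ = s^2 + r^2 := by
          rw [real_inner_smul_right, hupv, norm_smul, hv]
          simp [sq_abs]
          try ring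
  have hdu_dec : ⟪d, u⟫ = a * s + ⟪dp, up⟫ := by
    rw [hds, hus]
    simp only [inner_add_left, inner_add_right, real_inner_smul_left, real_inner_smul_right,
      hvv, hvup, hdpv]
    ring
  have hCS : ⟪dp, up⟫ ≤ b * r := real_inner_le_norm dp up
  have hb0 : (0:ℝ) ≤ b := norm_nonneg _
  -- the final contradiction, for any admissible direction w
  have hfinal : ∀ w : E2, ‖w‖ = 1 → InnerProductGeometry.angle w v ≤ β → 0 < ⟪w, u⟫ → False := by
    intro w hw hwa hwu
    obtain ⟨t, ht0, hbis, hmin⟩ := hlong w hw hwa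
    have e3 : p + t • w - p = t • w := by abel
    have e4 : p + t • w - q = t • w - c := by rw [hc]; abel
    have e5 : p + t • w - p' = t • w - d := by rw [hd]; abel
    rw [dist_eq_norm, dist_eq_norm, e3, e4] at hbis
    have hb2 : 2 * t * ⟪w, c⟫ = ‖c‖^2 := by
      have h6 : ‖t • w‖^2 = ‖t • w - c‖^2 := by rw [hbis]
      rw [norm_sub_sq_real, real_inner_smul_left] at h6
      linarith
    have hmin' := hmin p' hp'
    rw [dist_eq_norm, dist_eq_norm, e3, e5] at hmin'
    have hb3 : 2 * t * ⟪w, d⟫ ≤ ‖d‖^2 := by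
      have h6 : ‖t • w‖^2 ≤ ‖t • w - d‖^2 := by
        have := pow_le_pow_left₀ (norm_nonneg _) hmin' 2
        exact this
      rw [norm_sub_sq_real, real_inner_smul_left] at h6
      linarith
    have ht : 0 < t := by
      rcases lt_or_eq_of_le ht0 with h | h
      · exact h
      · exfalso; rw [← h] at hb2; simp at hb2; exact (pow_pos hcn 2).ne hb2
    have hwu' : ⟪w, c⟫ * ‖d‖^2 < ⟪w, d⟫ * ‖c‖^2 := by
      have hexp : ⟪w, u⟫ = (‖d‖^2)⁻¹ * ⟪w, d⟫ - (‖c‖^2)⁻¹ * ⟪w, c⟫ := by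
        rw [hu]
        simp [inner_sub_right, real_inner_smul_right]
        try ring
      rw [hexp, sub_pos, inv_mul_eq_div, inv_mul_eq_div,
        div_lt_div_iff₀ (by positivity) (by positivity)] at hwu
      exact hwu
    have hA : ‖c‖^2 * ‖d‖^2 < 2 * t * ⟪w, d⟫ * ‖c‖^2 := by
      calc ‖c‖^2 * ‖d‖^2 = (2 * t) * (⟪w, c⟫ * ‖d‖^2) := by rw [← hb2]; ring
        _ < (2 * t) * (⟪w, d⟫ * ‖c‖^2) := by
            exact mul_lt_mul_of_pos_left hwu' (by linarith)
        _ = 2 * t * ⟪w, d⟫ * ‖c‖^2 := by ring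
    have hB : 2 * t * ⟪w, d⟫ * ‖c‖^2 ≤ ‖c‖^2 * ‖d‖^2 := by
      calc 2 * t * ⟪w, d⟫ * ‖c‖^2 = (2 * t * ⟪w, d⟫) * ‖c‖^2 := by ring
        _ ≤ ‖d‖^2 * ‖c‖^2 := mul_le_mul_of_nonneg_right hb3 (sq_nonneg _)
        _ = ‖c‖^2 * ‖d‖^2 := by ring
    linarith [hA, hB]
  have hv0 : v ≠ 0 := by intro h; rw [h, norm_zero] at hv; norm_num at hv
  by_cases hup : up = 0
  · -- u is collinear with v
    have husv : u = s • v := by rw [hus, hup]; abel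
    have hs0 : s ≠ 0 := by
      intro h; rw [h, zero_smul] at husv; exact hu0 husv
    have hdus : ⟪d, u⟫ = a * s := by
      rw [hdu_dec, hup, inner_zero_right]; ring
    have hspos : 0 < s := by
      rcases lt_trichotomy s 0 with h | h | h
      · exfalso
        have : (0:ℝ) < Real.cos β * (‖d‖ * ‖u‖) := by positivity
        nlinarith [hkey, hdus, mul_pos ha (neg_pos.mpr h)]
      · exact absurd h hs0
      · exact h
    refine hfinal v hv ?_ ?_
    · rw [InnerProductGeometry.angle_self hv0]; exact hβ0.le
    · rw [← hsdef]; exact hspos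
  · -- generic case: rotate v by β towards the component of u orthogonal to v
    have hr : (0:ℝ) < r := norm_pos_iff.mpr hup
    set n : E2 := r⁻¹ • up with hndef
    have hnn : ‖n‖ = 1 := by
      rw [hndef, norm_smul, Real.norm_eq_abs, abs_inv, abs_of_pos hr, ← hrdef]
      field_simp
    have hvn : ⟪v, n⟫ = 0 := by rw [hndef, real_inner_smul_right, hvup]; ring
    have hnv : ⟪n, v⟫ = 0 := by rw [real_inner_comm]; exact hvn
    set w : E2 := Real.cos β • v + Real.sin β • n with hwdef
    have hw2 : ‖w‖^2 = 1 := by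
      rw [hwdef, norm_add_sq_real, real_inner_smul_left, real_inner_smul_right, hvn,
        norm_smul, norm_smul, hv, hnn]
      simp [sq_abs]
      try linarith [Real.sin_sq_add_cos_sq β]
    have hw1 : ‖w‖ = 1 := by
      rw [← Real.sqrt_sq (norm_nonneg w), hw2, Real.sqrt_one]
    have hwv : ⟪w, v⟫ = Real.cos β := by
      rw [hwdef, inner_add_left, real_inner_smul_left, real_inner_smul_left, hvv, hnv]
      ring
    have hangw : InnerProductGeometry.angle w v ≤ β := by
      show Real.arccos (⟪w, v⟫ / (‖w‖ * ‖v‖)) ≤ β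
      rw [hwv, hw1, hv]
      norm_num
      rw [Real.arccos_cos hβ0.le hβπ]
    have hnu : ⟪n, u⟫ = r := by
      rw [hndef, hus, real_inner_smul_left, inner_add_right, real_inner_smul_right, hupv,
        real_inner_self_eq_norm_sq, ← hrdef]
      field_simp
      try ring
    have hwu_eq : ⟪w, u⟫ = Real.cos β * s + Real.sin β * r := by
      rw [hwdef, inner_add_left, real_inner_smul_left, real_inner_smul_left, hnu, ← hsdef]
    have hclaim : 0 < Real.cos β * s + Real.sin β * r := by
      by_contra hneg
      push_neg at hneg
      have hkey' : Real.cos β * (‖d‖ * ‖u‖) ≤ a * s + ⟪dp, up⟫ := by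
        rw [hdu_dec] at hkey; exact hkey
      exact cone_arith (Real.cos β) (Real.sin β) a b s r ‖d‖ ‖u‖ ⟪dp, up⟫ hcosβ hsinβ
        (Real.sin_sq_add_cos_sq β) ha hb0 hr hdn hun hd2 hu2 hkey' hCS hneg
    exact hfinal w hw1 hangw (by rw [hwu_eq]; exact hclaim)
end

section
/- Let D₁, D₂ be two closed disks in the plane whose boundaries both pass through two distinct points p and q, and let D be a third closed disk through p and q whose center lies strictly between the centers of D₁ and D₂ on the perpendicular bisector of pq. Then D ⊆ D₁ ∪ D₂. -/
open Real

/-!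
For a fixed point `x`, the power `dist x a ^ 2 - dist a p ^ 2` of `x` with respect to the sphere
with centre `a` through `p` is an affine function of `a`. Along the segment from `c₁` to `c₂` it
is therefore a convex combination of its values at the endpoints, so if it is nonpositive at `c`
it is nonpositive at `c₁` or at `c₂`: a point of the ball centred at `c` lies in one of the two
other balls.
-/

open AffineMap

section

variable {V P : Type*} [NormedAddCommGroup V] [InnerProductSpace ℝ V] [MetricSpace P]
  [NormedAddTorsor V P]

theorem dist_sq_sub_dist_sq_eq_inner (x a p : P) :
    dist x a ^ 2 - dist a p ^ 2 = dist x p ^ 2 - 2 * inner ℝ (x -ᵥ p) (a -ᵥ p) := by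
  rw [dist_eq_norm_vsub V x a, dist_eq_norm_vsub V a p, dist_eq_norm_vsub V x p,
    ← vsub_sub_vsub_cancel_right x a p, norm_sub_sq_real]
  ring

theorem dist_sq_sub_dist_sq_lineMap (x p c₁ c₂ : P) (t : ℝ) :
    dist x (lineMap c₁ c₂ t) ^ 2 - dist (lineMap c₁ c₂ t) p ^ 2 =
      (1 - t) * (dist x c₁ ^ 2 - dist c₁ p ^ 2) + t * (dist x c₂ ^ 2 - dist c₂ p ^ 2) := by
  have hline : (lineMap c₁ c₂ t : P) -ᵥ p = (c₁ -ᵥ p) + t • ((c₂ -ᵥ p) - (c₁ -ᵥ p)) := by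
    rw [lineMap_apply, vadd_vsub_assoc, vsub_sub_vsub_cancel_right, add_comm]
  simp only [dist_sq_sub_dist_sq_eq_inner x _ p, hline, inner_add_right, inner_smul_right,
    inner_sub_right]
  ring

theorem mem_closedBall_dist_iff_dist_sq_sub_nonpos (x a p : P) :
    x ∈ Metric.closedBall a (dist a p) ↔ dist x a ^ 2 - dist a p ^ 2 ≤ 0 := by
  rw [Metric.mem_closedBall, sub_nonpos, pow_le_pow_iff_left₀ dist_nonneg dist_nonneg two_ne_zero]

theorem closedBall_dist_subset_union_of_wbtw (p : P) {c c₁ c₂ : P} (h : Wbtw ℝ c₁ c c₂) :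
    Metric.closedBall c (dist c p) ⊆
      Metric.closedBall c₁ (dist c₁ p) ∪ Metric.closedBall c₂ (dist c₂ p) := by
  obtain ⟨t, ⟨ht₀, ht₁⟩, rfl⟩ := h
  intro x hx
  rw [mem_closedBall_dist_iff_dist_sq_sub_nonpos, dist_sq_sub_dist_sq_lineMap] at hx
  simp only [Set.mem_union, mem_closedBall_dist_iff_dist_sq_sub_nonpos]
  by_contra! ⟨hA, hB⟩
  nlinarith [mul_nonneg (sub_nonneg.2 ht₁) hA.le, mul_nonneg ht₀ hB.le, mul_pos hA hB]

end

theorem pencil_of_circles_containment_general (p c c₁ c₂ : E2)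
    (hbtw : Sbtw ℝ c₁ c c₂) :
    Metric.closedBall c (dist c p) ⊆
      Metric.closedBall c₁ (dist c₁ p) ∪ Metric.closedBall c₂ (dist c₂ p) :=
  closedBall_dist_subset_union_of_wbtw p hbtw.wbtw

theorem pencil_of_circles_containment (p q c c₁ c₂ : E2) (hpq : p ≠ q)
    (h₁ : dist c₁ p = dist c₁ q) (h₂ : dist c₂ p = dist c₂ q)
    (hc : dist c p = dist c q)
    (hbtw : Sbtw ℝ c₁ c c₂) :
    Metric.closedBall c (dist c p) ⊆
      Metric.closedBall c₁ (dist c₁ p) ∪ Metric.closedBall c₂ (dist c₂ p) :=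
  pencil_of_circles_containment_general p c c₁ c₂ hbtw
end

section
/- Fix an even k = 2s, α = 2π/k, and directions u_j = (cos(2πj/k), −sin(2πj/k)). Let C_i be the cone at the origin bounded by u_i and u_{i+1}. Let p, q be distinct points with q ∈ C_i[p] (the translate of C_i with apex p). Suppose the ray u_ℓ[p] and the ray v[q] (for a unit vector v) intersect the perpendicular bisector b_pq at the same point. Then v lies in C_{2i+s−ℓ} ∪ C_{2i+s−ℓ+1}, where cone indices are taken mod k. -/
/-!
Identify the plane with `ℂ`, so that `u_j = ω ^ j` with `ω = exp (-2πi / k)`, and write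
`q - p = ω ^ i * z` with `z = a + b ω` in the cone spanned by `1` and `ω`. Since `w` lies on the
perpendicular bisector, `w - q` is the mirror image of `w - p` in it, which gives
`v = -(d / conj d) * conj u_ℓ = ω ^ (2i + s - ℓ) * z² / |z|²` (using `ω ^ s = -1`). Finally
`ω² = 2 Re ω · ω - 1` with `Re ω ≥ 0` puts `z²` in the cone spanned by `1, ω` when `b ≤ a` and
in the one spanned by `ω, ω²` when `a ≤ b`.
-/

open Real

/-- The `j`-th of the `k` equally spaced unit directions. -/
noncomputable def dir (k : ℕ) (j : ℤ) : E2 :=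
  (WithLp.equiv 2 (Fin 2 → ℝ)).symm ![Real.cos (2 * π * j / k), -Real.sin (2 * π * j / k)]

open Complex ComplexConjugate

def pairCone {M : Type*} [AddCommMonoid M] [Module ℝ M] (x y : M) : Set M :=
  {z | ∃ a b : ℝ, 0 ≤ a ∧ 0 ≤ b ∧ z = a • x + b • y}

namespace pairCone

variable {M N : Type*} [AddCommMonoid M] [Module ℝ M] [AddCommMonoid N] [Module ℝ N]
  {x y z : M}

lemma smul_mem (hz : z ∈ pairCone x y) {r : ℝ} (hr : 0 ≤ r) : r • z ∈ pairCone x y := by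
  obtain ⟨a, b, ha, hb, rfl⟩ := hz
  exact ⟨r * a, r * b, mul_nonneg hr ha, mul_nonneg hr hb, by simp only [smul_add, mul_smul]⟩

lemma apply_mem (f : M →ₗ[ℝ] N) (hz : z ∈ pairCone x y) : f z ∈ pairCone (f x) (f y) := by
  obtain ⟨a, b, ha, hb, rfl⟩ := hz
  exact ⟨a, b, ha, hb, by simp only [map_add, map_smul]⟩

end pairCone

lemma Complex.sq_eq_two_re_mul_sub_one {ω : ℂ} (hω : ‖ω‖ = 1) : ω ^ 2 = 2 * ω.re * ω - 1 := by
  have h1 := mul_conj' ω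
  have h2 := add_conj ω
  rw [hω] at h1
  push_cast at h1 h2
  linear_combination ω * h2 - h1

lemma sq_mem_pairCone {ω z : ℂ} (hω : ‖ω‖ = 1) (hre : 0 ≤ ω.re) (hz : z ∈ pairCone 1 ω) :
    z ^ 2 ∈ pairCone 1 ω ∨ z ^ 2 ∈ pairCone ω (ω ^ 2) := by
  obtain ⟨a, b, ha, hb, rfl⟩ := hz
  have hsq := Complex.sq_eq_two_re_mul_sub_one hω
  rcases le_total b a with hba | hab
  · refine .inl ⟨a ^ 2 - b ^ 2, 2 * a * b + 2 * b ^ 2 * ω.re, by nlinarith, by positivity, ?_⟩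
    simp only [Complex.real_smul]
    push_cast
    linear_combination (b : ℂ) ^ 2 * hsq
  · refine .inr ⟨2 * a ^ 2 * ω.re + 2 * a * b, b ^ 2 - a ^ 2, by positivity, by nlinarith, ?_⟩
    simp only [Complex.real_smul]
    push_cast
    linear_combination (a : ℂ) ^ 2 * hsq

lemma zpow_mul_smul_sq_mem_pairCone {ω z : ℂ} (hω : ‖ω‖ = 1) (hre : 0 ≤ ω.re)
    (hz : z ∈ pairCone 1 ω) (m : ℤ) {r : ℝ} (hr : 0 ≤ r) :
    ω ^ m * (r • z ^ 2) ∈ pairCone (ω ^ m) (ω ^ (m + 1)) ∨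
      ω ^ m * (r • z ^ 2) ∈ pairCone (ω ^ (m + 1)) (ω ^ (m + 2)) := by
  have hω0 : ω ≠ 0 := norm_ne_zero_iff.mp (hω ▸ one_ne_zero)
  have rotate := fun {x y : ℂ} (h : z ^ 2 ∈ pairCone x y) ↦
    pairCone.apply_mem (LinearMap.mulLeft ℝ (ω ^ m)) (pairCone.smul_mem h hr)
  rcases sq_mem_pairCone hω hre hz with h | h
  · left; simpa [zpow_add_one₀ hω0] using rotate h
  · right; simpa [zpow_add₀ hω0] using rotate h

-- `z ↦ -(d / conj d) * conj z` is the reflection in the line orthogonal to `d`.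
lemma eq_neg_div_conj_mul_conj {d u v : ℂ} {t : ℝ} (hu : ‖u‖ = 1) (hv : ‖v‖ = 1) (hd : d ≠ 0)
    (h : d = t * (u - v)) : v = -(d / conj d) * conj u := by
  have hu' := mul_conj' u
  have hv' := mul_conj' v
  rw [hu] at hu'
  rw [hv] at hv'
  have hcd : conj d ≠ 0 := (map_ne_zero _).mpr hd
  rw [neg_mul, div_mul_eq_mul_div, eq_neg_iff_add_eq_zero, add_div_eq_mul_add_div _ _ hcd,
    div_eq_zero_iff, or_iff_left hcd, h, map_mul, map_sub, conj_ofReal]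
  push_cast at hu' hv'
  linear_combination (t : ℂ) * hu' - t * hv'

lemma neg_div_conj_mul_conj_zpow {ω : ℂ} {n : ℤ} (hω : ‖ω‖ = 1) (hωn : ω ^ n = -1) (z : ℂ)
    (i ℓ : ℤ) :
    -(ω ^ i * z / conj (ω ^ i * z)) * conj (ω ^ ℓ) =
      ω ^ (2 * i + n - ℓ) * ((normSq z)⁻¹ • z ^ 2) := by
  have hω0 : ω ≠ 0 := norm_ne_zero_iff.mp (hω ▸ one_ne_zero)
  have hconj : conj ω = ω⁻¹ := (inv_eq_conj hω).symm
  have hz : z / conj z = (normSq z)⁻¹ • z ^ 2 := by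
    rw [div_eq_mul_inv, ← map_inv₀, inv_def, map_mul, conj_conj, conj_ofReal, Complex.real_smul]
    push_cast; ring
  rw [zpow_sub₀ hω0, zpow_add₀ hω0, hωn, two_mul, zpow_add₀ hω0, map_mul, map_zpow₀, map_zpow₀,
    hconj, ← hz, inv_zpow, inv_zpow]
  field_simp

noncomputable def dirRoot (k : ℕ) : ℂ := exp (-(2 * π / k) * I)

noncomputable def toComplex : E2 ≃ₗᵢ[ℝ] ℂ := Complex.orthonormalBasisOneI.repr.symm

lemma toComplex_dir (k : ℕ) (j : ℤ) : toComplex (dir k j) = dirRoot k ^ j := by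
  rw [dirRoot, ← exp_int_mul, toComplex, Complex.orthonormalBasisOneI_repr_symm_apply]
  have : (j : ℂ) * (-(2 * π / k) * I) = ((-(2 * π * j / k) : ℝ) : ℂ) * I := by push_cast; ring
  rw [this, exp_mul_I, ← ofReal_cos, ← ofReal_sin, Real.cos_neg, Real.sin_neg]
  simp [dir]

lemma dirRoot_ne_zero (k : ℕ) : dirRoot k ≠ 0 := exp_ne_zero _

lemma norm_dirRoot (k : ℕ) : ‖dirRoot k‖ = 1 := by
  rw [dirRoot, ← ofReal_natCast, ← ofReal_ofNat, ← ofReal_mul, ← ofReal_div, ← ofReal_neg]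
  exact norm_exp_ofReal_mul_I _

lemma dirRoot_two_mul_zpow_self {s : ℕ} (hs : s ≠ 0) : dirRoot (2 * s) ^ (s : ℤ) = -1 := by
  rw [dirRoot, ← exp_int_mul]
  have : ((s : ℤ) : ℂ) * (-(2 * π / ((2 * s : ℕ) : ℂ)) * I) = -(π * I) := by
    push_cast; field_simp
  rw [this, exp_neg_pi_mul_I]

lemma re_dirRoot_nonneg {k : ℕ} (hk : 4 ≤ k) : 0 ≤ (dirRoot k).re := by
  rw [dirRoot, ← ofReal_natCast, ← ofReal_ofNat, ← ofReal_mul, ← ofReal_div, ← ofReal_neg,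
    exp_ofReal_mul_I_re, Real.cos_neg]
  have hk' : (4 : ℝ) ≤ k := by exact_mod_cast hk
  apply Real.cos_nonneg_of_mem_Icc
  constructor
  · have : 0 ≤ 2 * π / k := by positivity
    linarith [pi_pos]
  · rw [div_le_iff₀ (by positivity)]
    nlinarith [pi_pos]

lemma norm_dir (k : ℕ) (j : ℤ) : ‖dir k j‖ = 1 := by
  rw [← toComplex.norm_map, toComplex_dir, norm_zpow, norm_dirRoot, one_zpow]

lemma mem_pairCone_dir_of_toComplex {k : ℕ} {v : E2} {j₁ j₂ : ℤ}
    (h : toComplex v ∈ pairCone (dirRoot k ^ j₁) (dirRoot k ^ j₂)) :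
    v ∈ pairCone (dir k j₁) (dir k j₂) := by
  simpa [← toComplex_dir] using pairCone.apply_mem toComplex.symm.toLinearEquiv.toLinearMap h

theorem compatible_direction_cone (s : ℕ) (hs : 4 ≤ s) (i ℓ : ℤ)
    (p q w : E2) (hpq : p ≠ q) (v : E2) (hv : ‖v‖ = 1)
    (hqC : ∃ a b : ℝ, 0 ≤ a ∧ 0 ≤ b ∧
      q = p + a • dir (2 * s) i + b • dir (2 * s) (i + 1))
    (t₁ t₂ : ℝ) (ht₁ : 0 ≤ t₁) (ht₂ : 0 ≤ t₂)
    (hw₁ : w = p + t₁ • dir (2 * s) ℓ) (hw₂ : w = q + t₂ • v)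
    (hbis : dist w p = dist w q) :
    (∃ a b : ℝ, 0 ≤ a ∧ 0 ≤ b ∧
      v = a • dir (2 * s) (2 * i + (s : ℤ) - ℓ) + b • dir (2 * s) (2 * i + (s : ℤ) - ℓ + 1)) ∨
    (∃ a b : ℝ, 0 ≤ a ∧ 0 ≤ b ∧
      v = a • dir (2 * s) (2 * i + (s : ℤ) - ℓ + 1) + b • dir (2 * s) (2 * i + (s : ℤ) - ℓ + 2)) := by
  obtain ⟨a, b, ha, hb, hq⟩ := hqC
  set ω := dirRoot (2 * s)
  have hω : ‖ω‖ = 1 := norm_dirRoot _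
  set z : ℂ := a + b * ω
  have ht : t₁ = t₂ := by
    rwa [hw₁, dist_self_add_left, norm_smul, norm_dir, mul_one, Real.norm_of_nonneg ht₁, ← hw₁,
      hw₂, dist_self_add_left, norm_smul, hv, mul_one, Real.norm_of_nonneg ht₂] at hbis
  have hd : toComplex q - toComplex p = ω ^ i * z := by
    simp only [hq, map_add, map_smul, Complex.real_smul, toComplex_dir,
      zpow_add_one₀ (dirRoot_ne_zero _), z, ω]
    ring
  have hvec : toComplex q - toComplex p = t₁ * (ω ^ ℓ - toComplex v) := by
    subst ht
    have hE : q - p = t₁ • (dir (2 * s) ℓ - v) := by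
      linear_combination (norm := module) hw₁ - hw₂
    simpa only [map_sub, map_smul, Complex.real_smul, toComplex_dir] using congrArg toComplex hE
  have hV : toComplex v = ω ^ (2 * i + s - ℓ) * ((normSq z)⁻¹ • z ^ 2) := by
    rw [eq_neg_div_conj_mul_conj (by rw [norm_zpow, hω, one_zpow]) (by simpa)
      (sub_ne_zero.mpr (toComplex.injective.ne hpq.symm)) hvec, hd,
      neg_div_conj_mul_conj_zpow hω (dirRoot_two_mul_zpow_self (by omega))]
  have hz : z ∈ pairCone 1 ω := ⟨a, b, ha, hb, by simp [Complex.real_smul, z]⟩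
  rcases zpow_mul_smul_sq_mem_pairCone hω (re_dirRoot_nonneg (by omega)) hz (2 * i + s - ℓ)
    (inv_nonneg.2 (normSq_nonneg z)) with h | h
  · exact .inl (mem_pairCone_dir_of_toComplex (hV ▸ h))
  · exact .inr (mem_pairCone_dir_of_toComplex (hV ▸ h))
end
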